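/- arXiv:math/0004149 — 2 statements merged into one kernel-verified Lean document; each statement's English description precedes it below -/
import Mathlib

section
/- There is a constant A > 0 such that for every real R ≥ 1, Σ_{r ≤ R} μ²(r)·σ_{1/2}(r)/φ(r) ≤ A·√R, where σ_{1/2}(r) = Σ_{d | r} d^{1/2}. -/
open Finset ArithmeticFunction

/-- The Generalized Riemann Hypothesis for Dirichlet L-functions: every zero of a
Dirichlet L-function in the critical strip lies on the critical line. -/
def GRH : Prop :=
  ∀ (N : ℕ) [NeZero N] (χ : DirichletCharacter ℂ N) (s : ℂ),
    DirichletCharacter.LFunction χ s = 0 → 0 < s.re → s.re < 1 → s.re = 1 / 2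

/-- `ψ(x; q, a) = ∑_{n ≤ x, n ≡ a (mod q)} Λ(n)`. -/
noncomputable def psi (x : ℝ) (q a : ℕ) : ℝ :=
  ∑ n ∈ (Finset.Icc 1 ⌊x⌋₊).filter (fun n : ℕ => (n : ZMod q) = (a : ZMod q)),
    ArithmeticFunction.vonMangoldt n

/-- `I(x,h,q,a) = ∫_x^{2x} (ψ(y+h;q,a) − ψ(y;q,a) − h/φ(q))² dy`. -/
noncomputable def momentI (x h : ℝ) (q a : ℕ) : ℝ :=
  ∫ y in x..(2 * x), (psi (y + h) q a - psi y q a - h / (q.totient : ℝ)) ^ 2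

/-- `λ_R(n) = ∑_{r ≤ R} (μ²(r)/φ(r)) ∑_{d ∣ (r,n)} d·μ(d)`. -/
noncomputable def lamR (R : ℝ) (n : ℕ) : ℝ :=
  ∑ r ∈ Finset.Icc 1 ⌊R⌋₊,
    ((ArithmeticFunction.moebius r : ℝ) ^ 2 / (r.totient : ℝ)) *
      ∑ d ∈ (Nat.gcd r n).divisors, (d : ℝ) * (ArithmeticFunction.moebius d : ℝ)

/-- `c = γ + ∑_p (log p)/(p(p−1))`. -/
noncomputable def cGY : ℝ :=
  Real.eulerMascheroniConstant +
    ∑' p : Nat.Primes, Real.log (p : ℕ) / (((p : ℕ) : ℝ) * (((p : ℕ) : ℝ) - 1))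

/-- `v(k) = ∑_{p ∣ k} (log p)/p`. -/
noncomputable def vGY (k : ℕ) : ℝ := ∑ p ∈ k.primeFactors, Real.log p / (p : ℝ)

/-- `w(k) = ∏_{p ∣ k} (1 + 1/√p)`. -/
noncomputable def wGY (k : ℕ) : ℝ := ∏ p ∈ k.primeFactors, (1 + 1 / Real.sqrt p)

/-- `g(k) = ∏_{p ∣ k} (1 + p/(p−1))`. -/
noncomputable def gGY (k : ℕ) : ℝ := ∏ p ∈ k.primeFactors, (1 + (p : ℝ) / ((p : ℝ) - 1))

/-- The twin prime constant `C = ∏_{p > 2} (1 − 1/(p−1)²)`. -/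
noncomputable def twinC : ℝ :=
  ∏' p : Nat.Primes, (if 2 < (p : ℕ) then 1 - 1 / (((p : ℕ) : ℝ) - 1) ^ 2 else 1)

/-- The singular series `𝔖(k)`. -/
noncomputable def singSeries (k : ℕ) : ℝ :=
  if 2 ∣ k ∧ k ≠ 0 then
    2 * twinC * ∏ p ∈ k.primeFactors.filter (fun p => 2 < p), ((p : ℝ) - 1) / ((p : ℝ) - 2)
  else 0

/-- `f(n,x,h)`, the length of the interval `[x,2x] ∩ [n−h,n)`. -/
noncomputable def flen (n : ℕ) (x h : ℝ) : ℝ :=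
  if x ≤ n ∧ (n : ℝ) < x + h then (n : ℝ) - x
  else if x + h ≤ n ∧ (n : ℝ) ≤ 2 * x then h
  else if 2 * x < n ∧ (n : ℝ) ≤ 2 * x + h then 2 * x - n + h
  else 0

/-! For squarefree `r` both `σ_{1/2}` and `φ` are products over the primes dividing `r`, and
`σ_{1/2}(r)/φ(r) = H(r) := ∏_{p ∣ r} (√p - 1)⁻¹`. The identity `√p · H(p) = 1 + H(p)` gives
`√r · H(r) = ∑_{d ∣ r} H(d)`, so the sum is at most
`∑_{dm ≤ R} μ²(d) H(d) / √(dm) ≤ 2√R ∑_d μ²(d) H(d) / d`.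
The last series converges: `(√p - 1)⁻¹ p^{1/4} ≤ 1` for `p ≥ 16`, so `H(d) ≪ d^{-1/4}` on squarefree `d`. -/

lemma Real.one_add_sqrt_div_sub_one {x : ℝ} (hx : 0 ≤ x) :
    (1 + √x) / (x - 1) = (√x - 1)⁻¹ := by
  have hfac : x - 1 = (√x - 1) * (√x + 1) := by nlinarith [Real.sq_sqrt hx]
  have hs1 : √x + 1 ≠ 0 := by positivity
  rw [hfac, add_comm, div_mul_cancel_right₀ hs1]

lemma Real.sqrt_mul_inv_sqrt_sub_one {x : ℝ} (hx : 0 ≤ x) (h1 : x ≠ 1) :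
    √x * (√x - 1)⁻¹ = 1 + (√x - 1)⁻¹ := by
  have hs1 : √x - 1 ≠ 0 := fun h => h1 (by
    rw [← Real.sq_sqrt hx, sub_eq_zero.mp h]; norm_num)
  field_simp
  ring

lemma Real.inv_sqrt_sub_one_nonneg {x : ℝ} (hx : 1 ≤ x) : 0 ≤ (√x - 1)⁻¹ :=
  inv_nonneg.mpr (sub_nonneg.mpr (Real.one_le_sqrt.mpr hx))

lemma Real.sq_rpow_one_div_four {x : ℝ} (hx : 0 ≤ x) : (x ^ (1 / 4 : ℝ)) ^ 2 = √x := by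
  rw [Real.sqrt_eq_rpow, ← Real.rpow_natCast, ← Real.rpow_mul hx]
  norm_num

lemma Real.rpow_one_div_four_pow_four {x : ℝ} (hx : 0 ≤ x) : (x ^ (1 / 4 : ℝ)) ^ 4 = x := by
  rw [← Real.rpow_natCast, ← Real.rpow_mul hx]
  norm_num

lemma Real.inv_sqrt_sub_one_mul_rpow_le_four {x : ℝ} (hx : 2 ≤ x) :
    (√x - 1)⁻¹ * x ^ (1 / 4 : ℝ) ≤ 4 := by
  set s := x ^ (1 / 4 : ℝ)
  have hs : 1.14 ≤ s := le_of_pow_le_pow_left₀ four_ne_zero (by positivity)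
    (by rw [Real.rpow_one_div_four_pow_four (by linarith)]; linarith)
  rw [← Real.sq_rpow_one_div_four (by linarith), inv_mul_le_iff₀ (by nlinarith)]
  nlinarith

lemma Real.inv_sqrt_sub_one_mul_rpow_le_one {x : ℝ} (hx : 16 ≤ x) :
    (√x - 1)⁻¹ * x ^ (1 / 4 : ℝ) ≤ 1 := by
  set s := x ^ (1 / 4 : ℝ)
  have hs : 2 ≤ s := le_of_pow_le_pow_left₀ four_ne_zero (by positivity)
    (by rw [Real.rpow_one_div_four_pow_four (by linarith)]; linarith)
  rw [← Real.sq_rpow_one_div_four (by linarith), inv_mul_le_iff₀ (by nlinarith)]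
  nlinarith

noncomputable def sqrtWeight : ArithmeticFunction ℝ :=
  prodPrimeFactors fun p => (√p - 1)⁻¹

lemma sqrtWeight_apply {n : ℕ} (hn : n ≠ 0) :
    sqrtWeight n = ∏ p ∈ n.primeFactors, (√p - 1)⁻¹ :=
  prodPrimeFactors_apply hn

lemma sqrtWeight_apply_prime {p : ℕ} (hp : p.Prime) : sqrtWeight p = (√p - 1)⁻¹ := by
  simp [sqrtWeight_apply hp.ne_zero, hp.primeFactors]

lemma sqrtWeight_nonneg (n : ℕ) : 0 ≤ sqrtWeight n := by
  rcases eq_or_ne n 0 with rfl | hn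
  · simp
  rw [sqrtWeight_apply hn]
  exact prod_nonneg fun p hp =>
    Real.inv_sqrt_sub_one_nonneg (by exact_mod_cast Nat.pos_of_mem_primeFactors hp)

noncomputable def sqrtArith : ArithmeticFunction ℝ := ⟨fun n => √n, by simp⟩

lemma sqrtArith_apply (n : ℕ) : sqrtArith n = √n := rfl

lemma isMultiplicative_sqrtArith : sqrtArith.IsMultiplicative :=
  ⟨by simp [sqrtArith], fun {m n} _ => by simp [sqrtArith, Real.sqrt_mul]⟩

lemma sum_sqrt_divisors_of_squarefree {n : ℕ} (hn : Squarefree n) :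
    ∑ d ∈ n.divisors, √d = ∏ p ∈ n.primeFactors, (1 + √p) :=
  (isMultiplicative_sqrtArith.prodPrimeFactors_one_add_of_squarefree hn).symm

lemma totient_eq_prod_primeFactors_of_squarefree {n : ℕ} (hn : Squarefree n) :
    (n.totient : ℝ) = ∏ p ∈ n.primeFactors, ((p : ℝ) - 1) := by
  have h := Nat.totient_mul_prod_primeFactors n
  rw [Nat.prod_primeFactors_of_squarefree hn, mul_comm,
    Nat.mul_right_inj hn.ne_zero] at h
  rw [h, Nat.cast_prod]
  exact prod_congr rfl fun p hp => Nat.cast_pred (Nat.pos_of_mem_primeFactors hp)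

lemma sum_sqrt_divisors_div_totient_of_squarefree {n : ℕ} (hn : Squarefree n) :
    (∑ d ∈ n.divisors, √d) / n.totient = sqrtWeight n := by
  rw [sum_sqrt_divisors_of_squarefree hn, totient_eq_prod_primeFactors_of_squarefree hn,
    ← prod_div_distrib, sqrtWeight_apply hn.ne_zero]
  exact prod_congr rfl fun p _ => Real.one_add_sqrt_div_sub_one p.cast_nonneg

lemma sqrt_mul_sqrtWeight_of_squarefree {n : ℕ} (hn : Squarefree n) :
    √n * sqrtWeight n = ∑ d ∈ n.divisors, sqrtWeight d := by
  rw [← (IsMultiplicative.prodPrimeFactors _).prodPrimeFactors_one_add_of_squarefree hn,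
    ← sqrtArith_apply, ← isMultiplicative_sqrtArith.prod_primeFactors hn,
    sqrtWeight_apply hn.ne_zero, ← prod_mul_distrib]
  refine prod_congr rfl fun p hp => ?_
  have hp := Nat.prime_of_mem_primeFactors hp
  rw [sqrtWeight_apply_prime hp, sqrtArith_apply]
  exact Real.sqrt_mul_inv_sqrt_sub_one p.cast_nonneg (by exact_mod_cast hp.ne_one)

lemma sqrtWeight_mul_rpow_le_of_squarefree {n : ℕ} (hn : Squarefree n) :
    sqrtWeight n * (n : ℝ) ^ (1 / 4 : ℝ) ≤ 4 ^ 16 := by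
  have hroot : (n : ℝ) ^ (1 / 4 : ℝ) = ∏ p ∈ n.primeFactors, (p : ℝ) ^ (1 / 4 : ℝ) := by
    conv_lhs => rw [← Nat.prod_primeFactors_of_squarefree hn]
    rw [Nat.cast_prod, Real.finsetProd_rpow _ _ fun p _ => p.cast_nonneg]
  rw [sqrtWeight_apply hn.ne_zero, hroot, ← prod_mul_distrib]
  calc ∏ p ∈ n.primeFactors, (√p - 1)⁻¹ * (p : ℝ) ^ (1 / 4 : ℝ)
      ≤ ∏ p ∈ n.primeFactors, if p < 16 then (4 : ℝ) else 1 := by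
        refine prod_le_prod (fun p hp => ?_) fun p hp => ?_
        · have := Real.inv_sqrt_sub_one_nonneg
            (by exact_mod_cast Nat.pos_of_mem_primeFactors hp : (1 : ℝ) ≤ p)
          positivity
        · have hp2 : (2 : ℝ) ≤ p := by exact_mod_cast (Nat.prime_of_mem_primeFactors hp).two_le
          split_ifs with h16
          · exact Real.inv_sqrt_sub_one_mul_rpow_le_four hp2
          · exact Real.inv_sqrt_sub_one_mul_rpow_le_one (by exact_mod_cast not_lt.mp h16)
    _ = 4 ^ #{p ∈ n.primeFactors | p < 16} := by
        rw [prod_ite, prod_const, prod_const_one, mul_one]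
    _ ≤ 4 ^ 16 := by
        refine pow_le_pow_right₀ (by norm_num) ?_
        calc #{p ∈ n.primeFactors | p < 16} ≤ #(range 16) :=
              card_le_card fun p hp => mem_range.mpr (mem_filter.mp hp).2
          _ = 16 := card_range 16

lemma moebius_sq_cast_eq_one {n : ℕ} (hn : Squarefree n) : (moebius n : ℝ) ^ 2 = 1 := by
  exact_mod_cast moebius_sq_eq_one_of_squarefree hn

noncomputable def invSqrt : ArithmeticFunction ℝ := ⟨fun n => (√n)⁻¹, by simp⟩

lemma invSqrt_apply (n : ℕ) : invSqrt n = (√n)⁻¹ := rfl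

noncomputable def squarefreeSqrtWeight : ArithmeticFunction ℝ :=
  ⟨fun n => (moebius n : ℝ) ^ 2 * sqrtWeight n * (√n)⁻¹, by simp⟩

lemma squarefreeSqrtWeight_apply (n : ℕ) :
    squarefreeSqrtWeight n = (moebius n : ℝ) ^ 2 * sqrtWeight n * (√n)⁻¹ := rfl

lemma squarefreeSqrtWeight_nonneg (n : ℕ) : 0 ≤ squarefreeSqrtWeight n := by
  have := sqrtWeight_nonneg n
  rw [squarefreeSqrtWeight_apply]
  positivity

lemma moebius_sq_mul_sum_sqrt_divisors_div_totient_le (r : ℕ) :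
    (moebius r : ℝ) ^ 2 * (∑ d ∈ r.divisors, √d) / r.totient
      ≤ (squarefreeSqrtWeight * invSqrt) r := by
  by_cases hr : Squarefree r
  swap
  · rw [moebius_eq_zero_of_not_squarefree hr, mul_apply]
    simpa using sum_nonneg fun x _ =>
      mul_nonneg (squarefreeSqrtWeight_nonneg x.1) (inv_nonneg.mpr (Real.sqrt_nonneg x.2))
  rw [moebius_sq_cast_eq_one hr, one_mul,
    sum_sqrt_divisors_div_totient_of_squarefree hr, mul_apply]
  have hr0 : √(r : ℝ) ≠ 0 :=
    (Real.sqrt_pos.mpr (by exact_mod_cast Nat.pos_of_ne_zero hr.ne_zero)).ne'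
  have hterm : ∀ x ∈ r.divisorsAntidiagonal,
      (√r)⁻¹ * sqrtWeight x.1 = squarefreeSqrtWeight x.1 * invSqrt x.2 := by
    intro x hx
    obtain ⟨hx, -⟩ := Nat.mem_divisorsAntidiagonal.mp hx
    rw [squarefreeSqrtWeight_apply, invSqrt_apply,
      moebius_sq_cast_eq_one (hr.squarefree_of_dvd (Dvd.intro _ hx)), ← hx, Nat.cast_mul,
      Real.sqrt_mul x.1.cast_nonneg, mul_inv]
    ring
  apply le_of_eq
  calc sqrtWeight r = (√r)⁻¹ * ∑ d ∈ r.divisors, sqrtWeight d := by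
        rw [← sqrt_mul_sqrtWeight_of_squarefree hr, inv_mul_cancel_left₀ hr0]
    _ = ∑ x ∈ r.divisorsAntidiagonal, (√r)⁻¹ * sqrtWeight x.1 := by
        rw [mul_sum, Nat.sum_divisorsAntidiagonal fun d _ => (√r)⁻¹ * sqrtWeight d]
    _ = _ := sum_congr rfl hterm

lemma sum_Ioc_inv_sqrt_le (M : ℕ) : ∑ m ∈ Ioc 0 M, (√m)⁻¹ ≤ 2 * √M := by
  induction M with
  | zero => simp
  | succ M ih =>
    rw [sum_Ioc_succ_top (Nat.zero_le M), Nat.cast_succ]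
    have hb : 0 < √((M : ℝ) + 1) := Real.sqrt_pos.mpr (by positivity)
    -- `1 = (√(M+1) - √M)(√(M+1) + √M) ≤ 2 √(M+1) (√(M+1) - √M)`
    have step : (√((M : ℝ) + 1))⁻¹ ≤ 2 * √((M : ℝ) + 1) - 2 * √M := by
      rw [inv_le_iff_one_le_mul₀' hb]
      nlinarith [Real.sq_sqrt (M.cast_nonneg : (0 : ℝ) ≤ M),
        Real.sq_sqrt (by positivity : (0 : ℝ) ≤ M + 1)]
    linarith

lemma sum_Ioc_mul_invSqrt_le (f : ArithmeticFunction ℝ) (hf : ∀ n, 0 ≤ f n) (N : ℕ) :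
    ∑ n ∈ Ioc 0 N, (f * invSqrt) n ≤ 2 * √N * ∑ n ∈ Ioc 0 N, f n * (√n)⁻¹ := by
  rw [sum_Ioc_mul_eq_sum_sum, mul_sum]
  refine sum_le_sum fun n hn => ?_
  have hdiv : √((N / n : ℕ) : ℝ) ≤ √N * (√n)⁻¹ := by
    rw [← Real.sqrt_inv, ← Real.sqrt_mul N.cast_nonneg, ← div_eq_mul_inv]
    exact Real.sqrt_le_sqrt Nat.cast_div_le
  calc f n * ∑ m ∈ Ioc 0 (N / n), invSqrt m ≤ f n * (2 * √((N / n : ℕ) : ℝ)) :=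
        mul_le_mul_of_nonneg_left (sum_Ioc_inv_sqrt_le _) (hf n)
    _ ≤ f n * (2 * (√N * (√n)⁻¹)) := by gcongr; exact hf n
    _ = 2 * √N * (f n * (√n)⁻¹) := by ring

lemma sum_Ioc_squarefreeSqrtWeight_div_sqrt_le (N : ℕ) :
    ∑ n ∈ Ioc 0 N, squarefreeSqrtWeight n * (√n)⁻¹
      ≤ 4 ^ 16 * ∑' n : ℕ, ((n : ℝ) ^ (5 / 4 : ℝ))⁻¹ := by
  have hsum : Summable fun n : ℕ => ((n : ℝ) ^ (5 / 4 : ℝ))⁻¹ :=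
    Real.summable_nat_rpow_inv.mpr (by norm_num)
  rw [← tsum_mul_left]
  refine (sum_le_sum fun n hn => ?_).trans
    ((hsum.mul_left _).sum_le_tsum _ fun n _ => by positivity)
  by_cases hsq : Squarefree n
  swap
  · rw [squarefreeSqrtWeight_apply, moebius_eq_zero_of_not_squarefree hsq]
    rw [Int.cast_zero, zero_pow two_ne_zero, zero_mul, zero_mul, zero_mul]
    positivity
  have hn : (0 : ℝ) < n := by exact_mod_cast (mem_Ioc.mp hn).1
  have hroot : 0 < (n : ℝ) ^ (1 / 4 : ℝ) := by positivity
  have hweight : sqrtWeight n ≤ 4 ^ 16 * ((n : ℝ) ^ (1 / 4 : ℝ))⁻¹ :=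
    (le_mul_inv_iff₀ hroot).mpr (sqrtWeight_mul_rpow_le_of_squarefree hsq)
  rw [squarefreeSqrtWeight_apply, moebius_sq_cast_eq_one hsq, one_mul, mul_assoc, ← mul_inv,
    Real.mul_self_sqrt hn.le, show (5 / 4 : ℝ) = 1 / 4 + 1 by norm_num,
    Real.rpow_add_one hn.ne', mul_inv, ← mul_assoc]
  gcongr

theorem lemma9_sigma_half :
    ∃ A : ℝ, 0 < A ∧ ∀ R : ℝ, 1 ≤ R →
      (∑ r ∈ Finset.Icc 1 ⌊R⌋₊,
          (ArithmeticFunction.moebius r : ℝ) ^ 2 * (∑ d ∈ r.divisors, Real.sqrt d)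
            / (r.totient : ℝ))
        ≤ A * Real.sqrt R := by
  set T := ∑' n : ℕ, ((n : ℝ) ^ (5 / 4 : ℝ))⁻¹
  have hT : 0 < T :=
    (Real.summable_nat_rpow_inv.mpr (by norm_num)).tsum_pos (fun _ => by positivity) 1
      (by norm_num)
  refine ⟨2 * (4 ^ 16 * T), by positivity, fun R hR => ?_⟩
  set N := ⌊R⌋₊
  have hN : √(N : ℝ) ≤ √R := Real.sqrt_le_sqrt (Nat.floor_le (by linarith))
  rw [show Icc 1 N = Ioc 0 N from Icc_add_one_left_eq_Ioc 0 N]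
  calc _ ≤ ∑ r ∈ Ioc 0 N, (squarefreeSqrtWeight * invSqrt) r :=
        sum_le_sum fun r _ => moebius_sq_mul_sum_sqrt_divisors_div_totient_le r
    _ ≤ 2 * √N * ∑ n ∈ Ioc 0 N, squarefreeSqrtWeight n * (√n)⁻¹ :=
        sum_Ioc_mul_invSqrt_le _ squarefreeSqrtWeight_nonneg N
    _ ≤ 2 * √N * (4 ^ 16 * T) := by gcongr; exact sum_Ioc_squarefreeSqrtWeight_div_sqrt_le N
    _ ≤ 2 * (4 ^ 16 * T) * √R := by rw [mul_right_comm]; gcongr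
end

section
/- There is a constant A > 0 such that for every real R ≥ 1, Σ_{0 < r ≤ R} r·d(r)/φ(r) ≤ A·R·log 2R. -/
open Finset ArithmeticFunction

/-! With `w(e) = μ(e)² d(e) / φ(e)` (`sqfreeSigmaDivTotient`), the identity
`r / φ(r) = ∑_{e ∣ r, e squarefree} 1 / φ(e)` and `d(ek) ≤ d(e) d(k)` give `r d(r) / φ(r) ≤ (w * d)(r)`. Hence
`∑_{r ≤ N} r d(r) / φ(r) ≤ ∑_{e ≤ N} w(e) ∑_{k ≤ N/e} d(k) ≤ N (1 + log N) ∑_{e ≤ N} w(e) / e`,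
and the last sum is at most the Euler product `∏_{p ≤ N} (1 + 2 / (p (p - 1))) ≤ e⁴`. -/

open scoped Nat ArithmeticFunction.sigma

namespace Nat

theorem sum_divisors_filter_squarefree_prod_primeFactors {R : Type*} [CommSemiring R] {n : ℕ}
    (hn : n ≠ 0) (g : ℕ → R) :
    ∑ d ∈ n.divisors with Squarefree d, ∏ p ∈ d.primeFactors, g p =
      ∏ p ∈ n.primeFactors, (1 + g p) := by
  rw [sum_divisors_filter_squarefree hn, factors_eq, List.toFinset_coe, toFinset_factors,
    prod_one_add]
  refine sum_congr rfl fun s hs ↦ ?_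
  rw [s.prod_val, Function.id_def, primeFactors_prod fun p hp ↦
    prime_of_mem_primeFactors (mem_powerset.mp hs hp)]

theorem totient_eq_prod_of_squarefree {n : ℕ} (hn : Squarefree n) :
    φ n = ∏ p ∈ n.primeFactors, (p - 1) := by
  rw [totient_eq_div_primeFactors_mul, prod_primeFactors_of_squarefree hn,
    Nat.div_self (pos_of_ne_zero hn.ne_zero), one_mul]

theorem dvd_primorial_of_squarefree {n N : ℕ} (hn : Squarefree n) (hN : n ≤ N) :
    n ∣ primorial N := by
  rw [← prod_primeFactors_of_squarefree hn, primorial_eq_prod_primesLE]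
  exact prod_dvd_prod_of_subset _ _ _ fun p hp ↦ mem_primesLE.mpr
    ⟨(le_of_mem_primeFactors hp).trans hN, prime_of_mem_primeFactors hp⟩

theorem cast_div_totient_eq_prod {n : ℕ} (hn : n ≠ 0) :
    (n / φ n : ℝ) = ∏ p ∈ n.primeFactors, (1 + ((p - 1 : ℕ) : ℝ)⁻¹) := by
  have hpred : ∀ p ∈ n.primeFactors, ((p - 1 : ℕ) : ℝ) + 1 = p := fun p hp ↦ by
    rw [← cast_add_one, Nat.sub_add_cancel (prime_of_mem_primeFactors hp).one_le]
  have hpos : ∀ p ∈ n.primeFactors, (0 : ℝ) < (p - 1 : ℕ) := fun p hp ↦ by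
    have := (prime_of_mem_primeFactors hp).two_le
    exact_mod_cast (by omega : 0 < p - 1)
  have euler : (φ n : ℝ) * ∏ p ∈ n.primeFactors, (p : ℝ) =
      n * ∏ p ∈ n.primeFactors, ((p - 1 : ℕ) : ℝ) := by
    simpa only [cast_mul, cast_prod] using
      congrArg (Nat.cast (R := ℝ)) (totient_mul_prod_primeFactors n)
  calc (n / φ n : ℝ)
      = (∏ p ∈ n.primeFactors, (p : ℝ)) / ∏ p ∈ n.primeFactors, ((p - 1 : ℕ) : ℝ) := by
        rw [div_eq_div_iff (by exact_mod_cast (totient_pos.mpr (pos_of_ne_zero hn)).ne')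
          (prod_pos hpos).ne', ← euler, mul_comm]
    _ = ∏ p ∈ n.primeFactors, (1 + ((p - 1 : ℕ) : ℝ)⁻¹) := by
        rw [← prod_div_distrib]
        refine prod_congr rfl fun p hp ↦ ?_
        rw [← hpred p hp, add_div, div_self (hpos p hp).ne', one_div]

theorem sum_divisors_filter_squarefree_inv_totient {n : ℕ} (hn : n ≠ 0) :
    ∑ d ∈ n.divisors with Squarefree d, (φ d : ℝ)⁻¹ = n / φ n := by
  rw [cast_div_totient_eq_prod hn, ← sum_divisors_filter_squarefree_prod_primeFactors hn]
  refine sum_congr rfl fun d hd ↦ ?_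
  rw [totient_eq_prod_of_squarefree (mem_filter.mp hd).2, cast_prod, prod_inv_distrib]

end Nat

namespace ArithmeticFunction

theorem sigma_zero_apply_of_squarefree {n : ℕ} (hn : Squarefree n) :
    σ 0 n = 2 ^ #n.primeFactors := by
  rw [sigma_zero_apply, Nat.card_divisors hn.ne_zero, ← prod_const]
  exact prod_congr rfl fun p hp ↦ by
    rw [Nat.factorization_eq_one_of_squarefree hn (Nat.prime_of_mem_primeFactors hp)
      (Nat.dvd_of_mem_primeFactors hp)]

theorem sigma_zero_mul_le (m n : ℕ) : σ 0 (m * n) ≤ σ 0 m * σ 0 n := by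
  simp only [sigma_zero_apply, Nat.divisors_mul]
  exact card_mul_le

noncomputable def sqfreeSigmaDivTotient : ArithmeticFunction ℝ :=
  ⟨fun n ↦ if Squarefree n then σ 0 n / φ n else 0, by simp⟩

theorem sqfreeSigmaDivTotient_apply (n : ℕ) :
    sqfreeSigmaDivTotient n = if Squarefree n then (σ 0 n / φ n : ℝ) else 0 :=
  rfl

theorem sqfreeSigmaDivTotient_nonneg (n : ℕ) : 0 ≤ sqfreeSigmaDivTotient n := by
  rw [sqfreeSigmaDivTotient_apply]
  split_ifs <;> positivity

theorem mul_sigma_zero_div_totient_le (n : ℕ) :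
    (n * σ 0 n / φ n : ℝ) ≤ (sqfreeSigmaDivTotient * σ 0) n := by
  rcases eq_or_ne n 0 with rfl | hn
  · simp
  calc (n * σ 0 n / φ n : ℝ)
      = ∑ d ∈ n.divisors with Squarefree d, (σ 0 n : ℝ) / φ d := by
        simp only [div_eq_mul_inv, ← mul_sum, Nat.sum_divisors_filter_squarefree_inv_totient hn]
        ring
    _ ≤ ∑ d ∈ n.divisors with Squarefree d, (σ 0 d * σ 0 (n / d) : ℝ) / φ d := by
        gcongr with d hd
        have hdn : d * (n / d) = n :=
          Nat.mul_div_cancel' (Nat.dvd_of_mem_divisors (mem_filter.mp hd).1)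
        exact_mod_cast hdn ▸ sigma_zero_mul_le d (n / d)
    _ = (sqfreeSigmaDivTotient * σ 0) n := by
        rw [mul_apply, sum_filter, Nat.sum_divisorsAntidiagonal
          (fun a b ↦ sqfreeSigmaDivTotient a * (σ 0 : ArithmeticFunction ℝ) b)]
        refine sum_congr rfl fun d _ ↦ ?_
        rw [sqfreeSigmaDivTotient_apply, natCoe_apply]
        split_ifs <;> ring

theorem sum_Ioc_sigma_zero_le (N : ℕ) :
    ∑ n ∈ Ioc 0 N, (σ 0 n : ℝ) ≤ N * (1 + Real.log N) := by
  calc ∑ n ∈ Ioc 0 N, (σ 0 n : ℝ) = ∑ n ∈ Ioc 0 N, ((N / n : ℕ) : ℝ) := by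
        exact_mod_cast sum_Ioc_sigma0_eq_sum_div N
    _ ≤ ∑ n ∈ Ioc 0 N, (N / n : ℝ) := sum_le_sum fun n _ ↦ Nat.cast_div_le
    _ = N * harmonic N := by
        rw [harmonic_eq_sum_Icc]
        push_cast
        rw [mul_sum]
        rfl
    _ ≤ N * (1 + Real.log N) := by
        gcongr
        exact harmonic_le_one_add_log N

theorem sqfreeSigmaDivTotient_div_eq_prod {n : ℕ} (hn : Squarefree n) :
    sqfreeSigmaDivTotient n / n = ∏ p ∈ n.primeFactors, (2 / (p - 1 : ℕ) / p : ℝ) := by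
  rw [prod_div_distrib, prod_div_distrib, prod_const, sqfreeSigmaDivTotient_apply, if_pos hn,
    sigma_zero_apply_of_squarefree hn, Nat.totient_eq_prod_of_squarefree hn]
  nth_rw 3 [← Nat.prod_primeFactors_of_squarefree hn]
  push_cast
  rfl

theorem sum_primesLE_two_div_pred_div_le (N : ℕ) :
    ∑ p ∈ Nat.primesLE N, (2 / (p - 1 : ℕ) / p : ℝ) ≤ 4 := by
  calc ∑ p ∈ Nat.primesLE N, (2 / (p - 1 : ℕ) / p : ℝ)
      ≤ ∑ p ∈ Nat.primesLE N, 4 * ((p : ℝ) ^ 2)⁻¹ := by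
        refine sum_le_sum fun p hp ↦ ?_
        have hp2 : (2 : ℝ) ≤ p := by exact_mod_cast Nat.two_le_of_mem_primesLE hp
        rw [Nat.cast_sub (Nat.one_lt_of_mem_primesLE hp).le, Nat.cast_one, div_div,
          ← div_eq_mul_inv, div_le_div_iff₀ (by nlinarith) (by positivity)]
        nlinarith
    _ ≤ ∑ i ∈ Ioo 1 (N + 1), 4 * ((i : ℝ) ^ 2)⁻¹ := by
        refine sum_le_sum_of_subset_of_nonneg (fun p hp ↦ ?_) fun _ _ _ ↦ by positivity
        have := Nat.mem_primesLE.mp hp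
        exact mem_Ioo.mpr ⟨this.2.one_lt, by omega⟩
    _ ≤ 4 := by
        rw [← mul_sum]
        have := sum_Ioo_inv_sq_le (α := ℝ) 1 (N + 1)
        norm_num at this
        linarith

theorem sum_Ioc_sqfreeSigmaDivTotient_div_le (N : ℕ) :
    ∑ n ∈ Ioc 0 N, sqfreeSigmaDivTotient n / n ≤ Real.exp 4 := by
  set g : ℕ → ℝ := fun p ↦ 2 / (p - 1 : ℕ) / p
  calc ∑ n ∈ Ioc 0 N, sqfreeSigmaDivTotient n / n
      = ∑ n ∈ Ioc 0 N with Squarefree n, ∏ p ∈ n.primeFactors, g p := by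
        rw [sum_filter]
        refine sum_congr rfl fun n _ ↦ ?_
        split_ifs with hn
        · exact sqfreeSigmaDivTotient_div_eq_prod hn
        · simp [sqfreeSigmaDivTotient_apply, hn]
    _ ≤ ∑ n ∈ (primorial N).divisors with Squarefree n, ∏ p ∈ n.primeFactors, g p := by
        refine sum_le_sum_of_subset_of_nonneg (fun n hn ↦ ?_) fun _ _ _ ↦ by positivity
        simp only [mem_filter, mem_Ioc, Nat.mem_divisors] at hn ⊢
        exact ⟨⟨Nat.dvd_primorial_of_squarefree hn.2 hn.1.2, primorial_ne_zero N⟩, hn.2⟩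
    _ = ∏ p ∈ (primorial N).primeFactors, (1 + g p) :=
        Nat.sum_divisors_filter_squarefree_prod_primeFactors (primorial_ne_zero N) g
    _ ≤ Real.exp (∑ p ∈ Nat.primesLE N, g p) := by
        rw [primeFactors_primorial]
        exact Real.prod_one_add_le_exp_sum _ fun p ↦ by positivity
    _ ≤ Real.exp 4 := Real.exp_le_exp.mpr (sum_primesLE_two_div_pred_div_le N)

theorem sum_Ioc_mul_sigma_zero_div_totient_le (N : ℕ) :
    ∑ n ∈ Ioc 0 N, (n * σ 0 n / φ n : ℝ) ≤ Real.exp 4 * N * (1 + Real.log N) := by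
  have inner : ∀ e ∈ Ioc 0 N,
      ∑ m ∈ Ioc 0 (N / e), (σ 0 m : ℝ) ≤ N / e * (1 + Real.log N) := fun e he ↦ by
    rcases Nat.eq_zero_or_pos (N / e) with h0 | hpos
    · rw [h0, Ioc_self, sum_empty]
      positivity
    refine (sum_Ioc_sigma_zero_le _).trans (mul_le_mul Nat.cast_div_le ?_ ?_ (by positivity))
    · gcongr
      exact_mod_cast Nat.div_le_self N e
    · positivity
  calc ∑ n ∈ Ioc 0 N, (n * σ 0 n / φ n : ℝ)
      ≤ ∑ n ∈ Ioc 0 N, (sqfreeSigmaDivTotient * σ 0) n :=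
        sum_le_sum fun n _ ↦ mul_sigma_zero_div_totient_le n
    _ = ∑ e ∈ Ioc 0 N, sqfreeSigmaDivTotient e * ∑ m ∈ Ioc 0 (N / e), (σ 0 m : ℝ) := by
        simp only [sum_Ioc_mul_eq_sum_sum, natCoe_apply]
    _ ≤ ∑ e ∈ Ioc 0 N, sqfreeSigmaDivTotient e * (N / e * (1 + Real.log N)) :=
        sum_le_sum fun e he ↦ mul_le_mul_of_nonneg_left (inner e he)
          (sqfreeSigmaDivTotient_nonneg e)
    _ = N * (1 + Real.log N) * ∑ e ∈ Ioc 0 N, sqfreeSigmaDivTotient e / e := by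
        rw [mul_sum]
        exact sum_congr rfl fun e _ ↦ by ring
    _ ≤ N * (1 + Real.log N) * Real.exp 4 := by
        gcongr
        exact sum_Ioc_sqfreeSigmaDivTotient_div_le N
    _ = Real.exp 4 * N * (1 + Real.log N) := by ring

end ArithmeticFunction

theorem Real.one_add_log_le_two_mul_log_two_mul {x : ℝ} (hx : 1 ≤ x) :
    1 + Real.log x ≤ 2 * Real.log (2 * x) := by
  rw [Real.log_mul two_ne_zero (by positivity)]
  linarith [Real.log_two_gt_d9, Real.log_nonneg hx]

theorem lemma9_divisor_sum :
    ∃ A : ℝ, 0 < A ∧ ∀ R : ℝ, 1 ≤ R →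
      (∑ r ∈ Finset.Icc 1 ⌊R⌋₊, (r : ℝ) * (r.divisors.card : ℝ) / (r.totient : ℝ))
        ≤ A * R * Real.log (2 * R) := by
  refine ⟨2 * Real.exp 4, by positivity, fun R hR ↦ ?_⟩
  set N := ⌊R⌋₊
  have hNR : (N : ℝ) ≤ R := Nat.floor_le (by linarith)
  have hN : (0 : ℝ) < N := by exact_mod_cast Nat.floor_pos.mpr hR
  calc ∑ r ∈ Icc 1 N, (r * #r.divisors / φ r : ℝ)
      = ∑ n ∈ Ioc 0 N, (n * σ 0 n / φ n : ℝ) := by simp only [sigma_zero_apply]; rfl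
    _ ≤ Real.exp 4 * N * (1 + Real.log N) := sum_Ioc_mul_sigma_zero_div_totient_le N
    _ ≤ Real.exp 4 * R * (2 * Real.log (2 * R)) := by
        gcongr
        exact (add_le_add_right (Real.log_le_log hN hNR) 1).trans
          (Real.one_add_log_le_two_mul_log_two_mul hR)
    _ = 2 * Real.exp 4 * R * Real.log (2 * R) := by ring
end
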